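/- Let a < b. A univariate real polynomial p of even degree 2d is nonnegative on the interval [a,b] if and only if it can be written p(x) = s(x) + (x−a)(b−x)t(x) where s and t are sums of squares of polynomials with deg s ≤ 2d and deg t ≤ 2d−2. -/

import Mathlib

open Polynomial

/-- A polynomial is a sum of squares of polynomials. -/
def IsSumOfSquaresPoly (s : Polynomial ℝ) : Prop :=
  ∃ (k : ℕ) (q : Fin k → Polynomial ℝ), s = ∑ i, (q i) ^ 2

/-!
Induct on the degree. A polynomial `p ≥ 0` on `[a, b]` of positive degree has a factor `q` of one
of three kinds: `(X - r)²` for a root `r ∈ (a, b)` (a double root, as `p` has a local minimum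
there); a linear factor nonnegative on `[a, b]` for a real root outside `(a, b)`; or a positive
quadratic for a non-real root. Each `q` has a representation of degree `deg q`, and the cofactor
is again nonnegative on `[a, b]`. Representations multiply, the parity of the degree selecting the
form: with `w = (X - a)(b - X)`,
`((X - a)u₁ + (b - X)v₁)((X - a)u₂ + (b - X)v₂) = (X - a)²u₁u₂ + (b - X)²v₁v₂ + w(u₁v₂ + u₂v₁)`,
and similarly for the other two products.
-/

open Set

theorem IsSumSq.map {R S : Type*} [NonAssocSemiring R] [NonAssocSemiring S] (f : R →+* S)
    {s : R} (hs : IsSumSq s) : IsSumSq (f s) := by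
  induction hs with
  | zero => simp
  | sq_add x _ ih => rw [map_add, map_mul]; exact .sq_add _ ih

theorem isSumOfSquaresPoly_iff {s : ℝ[X]} : IsSumOfSquaresPoly s ↔ IsSumSq s := by
  refine ⟨fun ⟨k, q, hs⟩ => hs ▸ IsSumSq.sum_sq _ _, fun hs => ?_⟩
  induction hs with
  | zero => exact ⟨0, ![], by simp⟩
  | sq_add f _ ih =>
    obtain ⟨k, q, rfl⟩ := ih
    exact ⟨k + 1, Fin.cons f q, by simp [Fin.sum_univ_succ, sq]⟩

theorem IsSumSq.eval_nonneg {s : ℝ[X]} (hs : IsSumSq s) (x : ℝ) : 0 ≤ s.eval x :=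
  (hs.map (evalRingHom x)).nonneg

namespace Polynomial

theorem natDegree_C_sub_X {R : Type*} [Ring R] [Nontrivial R] (b : R) :
    (C b - X).natDegree = 1 := by
  rw [← neg_sub, natDegree_neg, natDegree_X_sub_C]

theorem isSumSq_C {c : ℝ} (hc : 0 ≤ c) : IsSumSq (C c) := by
  rw [← Real.mul_self_sqrt hc, C_mul]
  exact .mul_self _

theorem sq_X_sub_C_dvd_of_isLocalMin {p : ℝ[X]} {r : ℝ} (hr : p.IsRoot r)
    (hmin : IsLocalMin (fun x => p.eval x) r) : (X - C r) ^ 2 ∣ p := by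
  rcases eq_or_ne p 0 with rfl | hp0
  · exact dvd_zero _
  have hder : (derivative p).IsRoot r := by
    rw [IsRoot.def, ← Polynomial.deriv]
    exact hmin.deriv_eq_zero
  exact (le_rootMultiplicity_iff hp0).1 ((one_lt_rootMultiplicity_iff_isRoot hp0).2 ⟨hr, hder⟩)

/-- The exceptional point `r` is harmless because `g` is continuous. -/
theorem eval_nonneg_of_mul {a b r : ℝ} (hab : a < b) {q g : ℝ[X]}
    (hq : ∀ x ∈ Ioo a b, x ≠ r → 0 < q.eval x) (hqg : ∀ x ∈ Icc a b, 0 ≤ (q * g).eval x) :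
    ∀ x ∈ Icc a b, 0 ≤ g.eval x := by
  have hclosed : IsClosed {x | 0 ≤ g.eval x} := isClosed_le continuous_const g.continuous
  have hsub : Ioo a b ∩ {r}ᶜ ⊆ {x | 0 ≤ g.eval x} := fun x ⟨hx, hxr⟩ =>
    nonneg_of_mul_nonneg_right (by simpa using hqg x (Ioo_subset_Icc_self hx)) (hq x hx hxr)
  rw [← closure_Ioo hab.ne]
  exact closure_minimal ((dense_compl_singleton r).open_subset_closure_inter isOpen_Ioo)
    isClosed_closure |>.trans (hclosed.closure_subset_iff.2 hsub)

end Polynomial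

namespace MarkovLukacs

variable {a b : ℝ}

/- Degrees are bounded on the summands rather than on `t`, so that multiplying two
representations needs no case split on `t = 0`. -/
def IsEvenRep (a b : ℝ) (n : ℕ) (p : ℝ[X]) : Prop :=
  ∃ s t : ℝ[X], IsSumSq s ∧ IsSumSq t ∧ s.natDegree ≤ n ∧
    ((X - C a) * (C b - X) * t).natDegree ≤ n ∧ p = s + (X - C a) * (C b - X) * t

def IsOddRep (a b : ℝ) (n : ℕ) (p : ℝ[X]) : Prop :=
  ∃ u v : ℝ[X], IsSumSq u ∧ IsSumSq v ∧ ((X - C a) * u).natDegree ≤ n ∧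
    ((C b - X) * v).natDegree ≤ n ∧ p = (X - C a) * u + (C b - X) * v

def IsRep (a b : ℝ) (n : ℕ) (p : ℝ[X]) : Prop :=
  if Even n then IsEvenRep a b n p else IsOddRep a b n p

theorem IsEvenRep.mul {m n : ℕ} {p q : ℝ[X]} (hp : IsEvenRep a b m p) (hq : IsEvenRep a b n q) :
    IsEvenRep a b (m + n) (p * q) := by
  obtain ⟨s₁, t₁, hs₁, ht₁, hds₁, hdt₁, rfl⟩ := hp
  obtain ⟨s₂, t₂, hs₂, ht₂, hds₂, hdt₂, rfl⟩ := hq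
  set w := (X - C a) * (C b - X)
  refine ⟨s₁ * s₂ + w ^ 2 * (t₁ * t₂), s₁ * t₂ + s₂ * t₁,
    hs₁.mul hs₂ |>.add ((IsSquare.sq w).isSumSq.mul (ht₁.mul ht₂)),
    (hs₁.mul ht₂).add (hs₂.mul ht₁), ?_, ?_, by ring⟩
  · rw [show w ^ 2 * (t₁ * t₂) = w * t₁ * (w * t₂) by ring]
    exact natDegree_add_le_of_degree_le (natDegree_mul_le_of_le hds₁ hds₂)
      (natDegree_mul_le_of_le hdt₁ hdt₂)
  · rw [show w * (s₁ * t₂ + s₂ * t₁) = s₁ * (w * t₂) + w * t₁ * s₂ by ring]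
    exact natDegree_add_le_of_degree_le (natDegree_mul_le_of_le hds₁ hdt₂)
      (natDegree_mul_le_of_le hdt₁ hds₂)

theorem IsOddRep.mul {m n : ℕ} {p q : ℝ[X]} (hp : IsOddRep a b m p) (hq : IsOddRep a b n q) :
    IsEvenRep a b (m + n) (p * q) := by
  obtain ⟨u₁, v₁, hu₁, hv₁, hdu₁, hdv₁, rfl⟩ := hp
  obtain ⟨u₂, v₂, hu₂, hv₂, hdu₂, hdv₂, rfl⟩ := hq
  refine ⟨(X - C a) ^ 2 * (u₁ * u₂) + (C b - X) ^ 2 * (v₁ * v₂), u₁ * v₂ + u₂ * v₁,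
    ((IsSquare.sq _).isSumSq.mul (hu₁.mul hu₂)).add ((IsSquare.sq _).isSumSq.mul (hv₁.mul hv₂)),
    (hu₁.mul hv₂).add (hu₂.mul hv₁), ?_, ?_, by ring⟩
  · rw [show (X - C a) ^ 2 * (u₁ * u₂) + (C b - X) ^ 2 * (v₁ * v₂) =
      (X - C a) * u₁ * ((X - C a) * u₂) + (C b - X) * v₁ * ((C b - X) * v₂) by ring]
    exact natDegree_add_le_of_degree_le (natDegree_mul_le_of_le hdu₁ hdu₂)
      (natDegree_mul_le_of_le hdv₁ hdv₂)
  · rw [show (X - C a) * (C b - X) * (u₁ * v₂ + u₂ * v₁) =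
      (X - C a) * u₁ * ((C b - X) * v₂) + (C b - X) * v₁ * ((X - C a) * u₂) by ring]
    exact natDegree_add_le_of_degree_le (natDegree_mul_le_of_le hdu₁ hdv₂)
      (natDegree_mul_le_of_le hdv₁ hdu₂)

theorem IsEvenRep.mul_isOddRep {m n : ℕ} {p q : ℝ[X]} (hp : IsEvenRep a b m p)
    (hq : IsOddRep a b n q) : IsOddRep a b (m + n) (p * q) := by
  obtain ⟨s, t, hs, ht, hds, hdt, rfl⟩ := hp
  obtain ⟨u, v, hu, hv, hdu, hdv, rfl⟩ := hq
  refine ⟨s * u + (C b - X) ^ 2 * (t * v), s * v + (X - C a) ^ 2 * (t * u),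
    (hs.mul hu).add ((IsSquare.sq _).isSumSq.mul (ht.mul hv)),
    (hs.mul hv).add ((IsSquare.sq _).isSumSq.mul (ht.mul hu)), ?_, ?_, by ring⟩
  · rw [show (X - C a) * (s * u + (C b - X) ^ 2 * (t * v)) =
      s * ((X - C a) * u) + (X - C a) * (C b - X) * t * ((C b - X) * v) by ring]
    exact natDegree_add_le_of_degree_le (natDegree_mul_le_of_le hds hdu)
      (natDegree_mul_le_of_le hdt hdv)
  · rw [show (C b - X) * (s * v + (X - C a) ^ 2 * (t * u)) =
      s * ((C b - X) * v) + (X - C a) * (C b - X) * t * ((X - C a) * u) by ring]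
    exact natDegree_add_le_of_degree_le (natDegree_mul_le_of_le hds hdv)
      (natDegree_mul_le_of_le hdt hdu)

theorem IsRep.mul {m n : ℕ} {p q : ℝ[X]} (hp : IsRep a b m p) (hq : IsRep a b n q) :
    IsRep a b (m + n) (p * q) := by
  by_cases hm : Even m <;> by_cases hn : Even n <;>
    simp only [IsRep, hm, hn, Nat.even_add, if_true, if_false, iff_true, iff_false, not_true]
      at hp hq ⊢
  · exact hp.mul hq
  · exact hp.mul_isOddRep hq
  · rw [add_comm, mul_comm]
    exact hq.mul_isOddRep hp
  · exact hp.mul hq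

theorem isRep_of_isSumSq {s : ℝ[X]} (hs : IsSumSq s) (hev : Even s.natDegree) :
    IsRep a b s.natDegree s := by
  rw [IsRep, if_pos hev]
  exact ⟨s, 0, hs, .zero, le_rfl, by simp, by simp⟩

/-- Lagrange interpolation at `a` and `b`. -/
theorem isRep_of_natDegree_eq_one (hab : a < b) {ℓ : ℝ[X]} (hℓ : ℓ.natDegree = 1)
    (ha : 0 ≤ ℓ.eval a) (hb : 0 ≤ ℓ.eval b) : IsRep a b ℓ.natDegree ℓ := by
  rw [IsRep, hℓ, if_neg Nat.not_even_one]
  have hba : 0 < b - a := sub_pos.2 hab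
  refine ⟨C (ℓ.eval b / (b - a)), C (ℓ.eval a / (b - a)), isSumSq_C (by positivity),
    isSumSq_C (by positivity), natDegree_mul_le_of_le (natDegree_X_sub_C_le a) (natDegree_C _).le,
    natDegree_mul_le_of_le ((natDegree_C_sub_X b).le) (natDegree_C _).le, ?_⟩
  rw [eq_X_add_C_of_natDegree_le_one hℓ.le]
  refine Polynomial.funext fun x => ?_
  simp only [eval_add, eval_mul, eval_sub, eval_C, eval_X]
  field_simp
  ring

/-- The factors split off in the induction: by `eval_nonneg_of_mul` the cofactor stays
nonnegative on `[a, b]`. -/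
def HasRepFactor (a b : ℝ) (p : ℝ[X]) : Prop :=
  ∃ q g : ℝ[X], ∃ r : ℝ, p = q * g ∧ 0 < q.natDegree ∧ IsRep a b q.natDegree q ∧
    ∀ x ∈ Ioo a b, x ≠ r → 0 < q.eval x

theorem hasRepFactor_of_isRoot_mem_Ioo {p : ℝ[X]} {r : ℝ} (hp : ∀ x ∈ Icc a b, 0 ≤ p.eval x)
    (hr : p.IsRoot r) (hrab : r ∈ Ioo a b) : HasRepFactor a b p := by
  have hmin : IsLocalMin (fun x => p.eval x) r :=
    Filter.mem_of_superset (Icc_mem_nhds hrab.1 hrab.2) fun x hx => by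
      simpa [hr.eq_zero] using hp x hx
  obtain ⟨g, rfl⟩ := sq_X_sub_C_dvd_of_isLocalMin hr hmin
  have hq : ((X - C r) ^ 2).natDegree = 2 := by compute_degree!
  refine ⟨_, g, r, rfl, by omega, ?_, fun x _ hxr => ?_⟩
  · exact isRep_of_isSumSq (IsSquare.sq _).isSumSq (by rw [hq]; exact even_two)
  · simpa using pow_pos (abs_pos.2 (sub_ne_zero.2 hxr)) 2

theorem hasRepFactor_of_isRoot_notMem_Ioo (hab : a < b) {p : ℝ[X]} {r : ℝ} (hr : p.IsRoot r)
    (hrab : r ∉ Ioo a b) : HasRepFactor a b p := by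
  have hdvd := mul_divByMonic_eq_iff_isRoot.2 hr
  rcases le_or_gt r a with hra | har
  · refine ⟨X - C r, _, r, hdvd.symm, by simp, ?_, fun x hx _ => ?_⟩
    · exact isRep_of_natDegree_eq_one hab (natDegree_X_sub_C r) (by simpa) (by simp; linarith)
    · simpa using hra.trans_lt hx.1
  · have hbr : b ≤ r := not_lt.1 fun hrb => hrab ⟨har, hrb⟩
    refine ⟨C r - X, -(p /ₘ (X - C r)), r, by linear_combination hdvd.symm,
      by simp [natDegree_C_sub_X], ?_, fun x hx _ => ?_⟩
    · exact isRep_of_natDegree_eq_one hab (natDegree_C_sub_X r) (by simp; linarith) (by simpa)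
    · simpa using hx.2.trans_le hbr

theorem hasRepFactor_of_aeval_eq_zero {p : ℝ[X]} {z : ℂ} (hz : aeval z p = 0) (him : z.im ≠ 0) :
    HasRepFactor a b p := by
  obtain ⟨g, hg⟩ := p.quadratic_dvd_of_aeval_eq_zero_im_ne_zero hz him
  have hQ : X ^ 2 - C (2 * z.re) * X + C (‖z‖ ^ 2) = (X - C z.re) ^ 2 + C z.im ^ 2 := by
    rw [Complex.sq_norm, Complex.normSq_apply]
    simp only [C_add, C_mul, map_ofNat]
    ring
  rw [hQ] at hg
  have hdeg : ((X - C z.re) ^ 2 + C z.im ^ 2).natDegree = 2 := by compute_degree!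
  refine ⟨_, g, 0, hg, by omega, ?_, fun x _ _ => ?_⟩
  · exact isRep_of_isSumSq ((IsSquare.sq _).isSumSq.add (IsSquare.sq _).isSumSq)
      (by rw [hdeg]; exact even_two)
  · simp only [eval_add, eval_pow, eval_sub, eval_X, eval_C]
    positivity

theorem hasRepFactor (hab : a < b) {p : ℝ[X]} (hdeg : 0 < p.natDegree)
    (hp : ∀ x ∈ Icc a b, 0 ≤ p.eval x) : HasRepFactor a b p := by
  obtain ⟨z, hz⟩ := IsAlgClosed.exists_aeval_eq_zero ℂ p (natDegree_pos_iff_degree_pos.1 hdeg).ne'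
  by_cases him : z.im = 0
  · have hr : p.IsRoot z.re := by
      rw [← Complex.re_add_im z, him, Complex.ofReal_zero, zero_mul, add_zero] at hz
      exact Complex.ofReal_eq_zero.1 ((aeval_ofReal p z.re).symm.trans hz)
    by_cases hrab : z.re ∈ Ioo a b
    · exact hasRepFactor_of_isRoot_mem_Ioo hp hr hrab
    · exact hasRepFactor_of_isRoot_notMem_Ioo hab hr hrab
  · exact hasRepFactor_of_aeval_eq_zero hz him

theorem natDegree_le_sub_two_of_natDegree_mul_le {t : ℝ[X]} {n : ℕ}
    (h : ((X - C a) * (C b - X) * t).natDegree ≤ n) : t.natDegree ≤ n - 2 := by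
  rcases eq_or_ne t 0 with rfl | ht
  · simp
  have hw : ((X - C a) * (C b - X)).natDegree = 2 := by compute_degree!
  rw [natDegree_mul (ne_zero_of_natDegree_gt (hw ▸ two_pos)) ht, hw] at h
  omega

theorem isRep_of_nonneg (hab : a < b) {p : ℝ[X]} (hp : ∀ x ∈ Icc a b, 0 ≤ p.eval x) :
    IsRep a b p.natDegree p := by
  induction hn : p.natDegree using Nat.strong_induction_on generalizing p with
  | _ n ih =>
  rcases Nat.eq_zero_or_pos n with rfl | hpos
  · have hc : p = C (p.eval a) := by rw [eq_C_of_natDegree_eq_zero hn, eval_C]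
    rw [hc]
    simpa using isRep_of_isSumSq (a := a) (b := b)
      (isSumSq_C (hp a (left_mem_Icc.2 hab.le))) (by simp)
  · obtain ⟨q, g, r, rfl, hq, hqrep, hqpos⟩ := hasRepFactor hab (hn ▸ hpos) hp
    have hp0 : q * g ≠ 0 := ne_zero_of_natDegree_gt (hn ▸ hpos)
    rw [natDegree_mul (left_ne_zero_of_mul hp0) (right_ne_zero_of_mul hp0)] at hn
    subst hn
    exact hqrep.mul (ih _ (by omega) (eval_nonneg_of_mul hab hqpos hp) rfl)

end MarkovLukacs

/-- Markov–Lukács representation (even-degree case): for `a < b`, a polynomial `p` of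
degree `2d` is nonnegative on `[a, b]` iff `p = s + (x−a)(b−x)·t` with `s, t` sums of
squares, `deg s ≤ 2d`, `deg t ≤ 2d − 2`. -/
theorem stmt10 (a b : ℝ) (hab : a < b) (d : ℕ) (p : Polynomial ℝ)
    (hdeg : p.natDegree = 2 * d) :
    (∀ x ∈ Set.Icc a b, 0 ≤ p.eval x) ↔
      ∃ s t : Polynomial ℝ, IsSumOfSquaresPoly s ∧ IsSumOfSquaresPoly t ∧
        s.natDegree ≤ 2 * d ∧ t.natDegree ≤ 2 * d - 2 ∧
        p = s + (X - C a) * (C b - X) * t := by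
  constructor
  · intro hp
    have hrep := MarkovLukacs.isRep_of_nonneg hab hp
    rw [hdeg, MarkovLukacs.IsRep, if_pos (even_two_mul d)] at hrep
    obtain ⟨s, t, hs, ht, hds, hdt, hpst⟩ := hrep
    exact ⟨s, t, isSumOfSquaresPoly_iff.2 hs, isSumOfSquaresPoly_iff.2 ht, hds,
      MarkovLukacs.natDegree_le_sub_two_of_natDegree_mul_le hdt, hpst⟩
  · rintro ⟨s, t, hs, ht, -, -, rfl⟩ x hx
    have hsx := (isSumOfSquaresPoly_iff.1 hs).eval_nonneg x
    have htx := (isSumOfSquaresPoly_iff.1 ht).eval_nonneg x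
    have hxa : 0 ≤ x - a := sub_nonneg.2 hx.1
    have hbx : 0 ≤ b - x := sub_nonneg.2 hx.2
    simp only [eval_add, eval_mul, eval_sub, eval_X, eval_C]
    positivity
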